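/- Assume p = 2. Let e ≥ 0 be an integer and q = 2^e. Define σ : SL(2,k) → SL(4,k) by σ([[a,b],[c,d]]) = [[1, 0, 0, 0], [a^{q}b^{q}, a^{2q}, b^{2q}, 0], [c^{q}d^{q}, c^{2q}, d^{2q}, 0], [b^{q}c^{q}, a^{q}c^{q}, b^{q}d^{q}, 1]]. Then σ is a group homomorphism; the set of column vectors v ∈ k⁴ with σ(A)·v = v for all A ∈ SL(2,k) is exactly the line k·(0,0,0,1)ᵗ, and the set of row vectors w ∈ k⁴ with w·σ(A) = w for all A ∈ SL(2,k) is exactly the line k·(1,0,0,0). -/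

import Mathlib

open Matrix

/-- The explicit map of form (V)♯ (for `p = 2`). -/
noncomputable def famV (k : Type*) [Field k] (q : ℕ)
    (A : SpecialLinearGroup (Fin 2) k) : Matrix (Fin 4) (Fin 4) k :=
  let a := A.1 0 0
  let b := A.1 0 1
  let c := A.1 1 0
  let d := A.1 1 1
  !![1, 0, 0, 0;
     a ^ q * b ^ q, a ^ (2 * q), b ^ (2 * q), 0;
     c ^ q * d ^ q, c ^ (2 * q), d ^ (2 * q), 0;
     b ^ q * c ^ q, a ^ q * c ^ q, b ^ q * d ^ q, 1]

/-! `σ` for `q = 2^e` is `σ` for `q = 1` precomposed with the `e`-th Frobenius twist of `SL(2,k)`,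
itself a group homomorphism, so multiplicativity and `det σ(A) = 1` reduce to polynomial identities
in the entries that hold modulo `2` and `ad - bc = 1`. The first row and last column of every `σ(A)`
are unit vectors, and the two elementary unipotent matrices alone already cut the fixed vectors
down to those lines. -/

section unipotent

variable {R : Type*} [CommRing R]

def upperUnipotent : SpecialLinearGroup (Fin 2) R := ⟨!![1, 1; 0, 1], by simp [det_fin_two_of]⟩

def lowerUnipotent : SpecialLinearGroup (Fin 2) R := ⟨!![1, 0; 1, 1], by simp [det_fin_two_of]⟩

end unipotent

section famV

variable {k : Type*} [Field k]

theorem famV_pow_eq_famV_one_map (p : ℕ) [ExpChar k p] (e : ℕ)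
    (A : SpecialLinearGroup (Fin 2) k) :
    famV k (p ^ e) A = famV k 1 (SpecialLinearGroup.map (iterateFrobenius k p e) A) := by
  simp [famV, iterateFrobenius_def, ← pow_mul, mul_comm]

theorem famV_one_mul [CharP k 2] (A B : SpecialLinearGroup (Fin 2) k) :
    famV k 1 (A * B) = famV k 1 A * famV k 1 B := by
  have hA := A.det_coe
  have hB := B.det_coe
  rw [det_fin_two] at hA hB
  ext i j
  fin_cases i <;> fin_cases j <;>
    simp [famV, mul_apply, Fin.sum_univ_four, Fin.sum_univ_two] <;> grind

theorem det_famV_one [CharP k 2] (A : SpecialLinearGroup (Fin 2) k) :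
    (famV k 1 A).det = 1 := by
  have hA := A.det_coe
  rw [det_fin_two] at hA
  simp [famV, det_succ_row_zero, Fin.sum_univ_succ]
  grind

variable {q : ℕ}

theorem famV_mulVec_single_three (A : SpecialLinearGroup (Fin 2) k) :
    famV k q A *ᵥ ![0, 0, 0, 1] = ![0, 0, 0, 1] := by
  ext i
  fin_cases i <;> simp [famV, mulVec, dotProduct, Fin.sum_univ_four]

theorem single_zero_vecMul_famV (A : SpecialLinearGroup (Fin 2) k) :
    ![1, 0, 0, 0] ᵥ* famV k q A = ![1, 0, 0, 0] := by
  ext j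
  fin_cases j <;> simp [famV, vecMul, dotProduct, Fin.sum_univ_four]

theorem famV_upperUnipotent (hq : q ≠ 0) :
    famV k q upperUnipotent = !![1, 0, 0, 0; 1, 1, 1, 0; 0, 0, 1, 0; 0, 0, 1, 1] := by
  ext i j
  fin_cases i <;> fin_cases j <;> simp [famV, upperUnipotent, hq]

theorem famV_lowerUnipotent (hq : q ≠ 0) :
    famV k q lowerUnipotent = !![1, 0, 0, 0; 0, 1, 0, 0; 1, 1, 1, 0; 0, 1, 0, 1] := by
  ext i j
  fin_cases i <;> fin_cases j <;> simp [famV, lowerUnipotent, hq]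

theorem forall_famV_mulVec_eq_self_iff (hq : q ≠ 0) (v : Fin 4 → k) :
    (∀ A, famV k q A *ᵥ v = v) ↔ ∃ c : k, v = c • ![0, 0, 0, 1] := by
  refine ⟨fun hv ↦ ⟨v 3, ?_⟩, ?_⟩
  · have hu := congrFun (hv upperUnipotent)
    have hl := congrFun (hv lowerUnipotent)
    simp only [famV_upperUnipotent hq, famV_lowerUnipotent hq] at hu hl
    have hu3 := hu 3
    have hl2 := hl 2
    have hl3 := hl 3
    simp [mulVec, dotProduct, Fin.sum_univ_four] at hu3 hl2 hl3
    ext i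
    fin_cases i <;> simp <;> grind
  · rintro ⟨c, rfl⟩ A
    rw [mulVec_smul, famV_mulVec_single_three]

theorem forall_vecMul_famV_eq_self_iff (hq : q ≠ 0) (w : Fin 4 → k) :
    (∀ A, w ᵥ* famV k q A = w) ↔ ∃ c : k, w = c • ![1, 0, 0, 0] := by
  refine ⟨fun hw ↦ ⟨w 0, ?_⟩, ?_⟩
  · have hu := congrFun (hw upperUnipotent)
    have hl := congrFun (hw lowerUnipotent)
    simp only [famV_upperUnipotent hq, famV_lowerUnipotent hq] at hu hl
    have hu0 := hu 0
    have hu2 := hu 2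
    have hl0 := hl 0
    simp [vecMul, dotProduct, Fin.sum_univ_four] at hu0 hu2 hl0
    ext j
    fin_cases j <;> simp <;> grind
  · rintro ⟨c, rfl⟩ A
    rw [smul_vecMul, single_zero_vecMul_famV]

end famV

theorem stmt12 {k : Type*} [Field k] {p : ℕ} [CharP k p]
    (hp : p = 2) (e : ℕ) :
    (∀ A : SpecialLinearGroup (Fin 2) k, (famV k (p ^ e) A).det = 1) ∧
      (∀ A B : SpecialLinearGroup (Fin 2) k,
        famV k (p ^ e) (A * B) = famV k (p ^ e) A * famV k (p ^ e) B) ∧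
      (∀ v : Fin 4 → k,
        (∀ A : SpecialLinearGroup (Fin 2) k, famV k (p ^ e) A *ᵥ v = v) ↔
          ∃ c : k, v = c • ![0, 0, 0, 1]) ∧
      ∀ w : Fin 4 → k,
        (∀ A : SpecialLinearGroup (Fin 2) k, w ᵥ* famV k (p ^ e) A = w) ↔
          ∃ c : k, w = c • ![1, 0, 0, 0] := by
  subst hp
  have hq : 2 ^ e ≠ 0 := by positivity
  refine ⟨fun A ↦ ?_, fun A B ↦ ?_, forall_famV_mulVec_eq_self_iff hq,
    forall_vecMul_famV_eq_self_iff hq⟩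
  · rw [famV_pow_eq_famV_one_map, det_famV_one]
  · simp only [famV_pow_eq_famV_one_map 2, map_mul, famV_one_mul]
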